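/- Gallager's channel function E_0(ρ, W, Q) := −log Σ_y (Σ_x Q(x) W(y|x)^{1/(1+ρ)})^{1+ρ} is a concave function of ρ on [0,∞) for any fixed input distribution Q and channel W. -/

import Mathlib

/-!
Writing `s = 1 + ρ`, it suffices that `F(s) = ∑_y (∑_x Q(x) W(y|x) ^ (1/s)) ^ s` is log-convex
on `s > 0`. For fixed `y`, `t ↦ ∑_x Q(x) W(y|x) ^ t` is a sum of log-linear functions, hence
log-convex by Hölder's inequality; `s ↦ g(1/s) ^ s` is log-convex whenever `g` is, because its
logarithm is the perspective `s ↦ s · log g(1/s)` of the convex function `log g`; and a second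
application of Hölder's inequality shows that the sum over `y` is again log-convex.
-/

open Real Finset

/-- Multiplicative form of log-convexity; unlike convexity of `log ∘ f`, it allows the value `0`. -/
def LogConvexOn {E : Type*} [AddCommMonoid E] [SMul ℝ E] (s : Set E) (f : E → ℝ) : Prop :=
  (∀ x ∈ s, 0 ≤ f x) ∧
    ∀ ⦃x⦄, x ∈ s → ∀ ⦃y⦄, y ∈ s → ∀ ⦃a b : ℝ⦄, 0 ≤ a → 0 ≤ b → a + b = 1 →
      f (a • x + b • y) ≤ f x ^ a * f y ^ b

theorem Finset.sum_rpow_mul_rpow_le {ι : Type*} (s : Finset ι) {f g : ι → ℝ}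
    (hf : ∀ i ∈ s, 0 ≤ f i) (hg : ∀ i ∈ s, 0 ≤ g i) {a b : ℝ} (ha : 0 ≤ a) (hb : 0 ≤ b)
    (hab : a + b = 1) :
    ∑ i ∈ s, f i ^ a * g i ^ b ≤ (∑ i ∈ s, f i) ^ a * (∑ i ∈ s, g i) ^ b := by
  rcases ha.eq_or_lt with rfl | ha
  · obtain rfl : b = 1 := by linarith
    simp
  rcases hb.eq_or_lt with rfl | hb
  · obtain rfl : a = 1 := by linarith
    simp
  calc ∑ i ∈ s, f i ^ a * g i ^ b
      ≤ (∑ i ∈ s, (f i ^ a) ^ a⁻¹) ^ (1 / a⁻¹) * (∑ i ∈ s, (g i ^ b) ^ b⁻¹) ^ (1 / b⁻¹) :=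
        inner_le_Lp_mul_Lq_of_nonneg s (Real.HolderConjugate.inv_inv ha hb hab)
          (fun i hi => rpow_nonneg (hf i hi) a) (fun i hi => rpow_nonneg (hg i hi) b)
    _ = (∑ i ∈ s, f i) ^ a * (∑ i ∈ s, g i) ^ b := by
        rw [sum_congr rfl fun i hi => rpow_rpow_inv (hf i hi) ha.ne',
          sum_congr rfl fun i hi => rpow_rpow_inv (hg i hi) hb.ne', one_div, one_div, inv_inv,
          inv_inv]

namespace LogConvexOn

variable {E : Type*} [AddCommMonoid E] [SMul ℝ E] {s : Set E}

theorem sum {ι : Type*} {t : Finset ι} {f : ι → E → ℝ} (hf : ∀ i ∈ t, LogConvexOn s (f i)) :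
    LogConvexOn s (fun x => ∑ i ∈ t, f i x) :=
  ⟨fun x hx => sum_nonneg fun i hi => (hf i hi).1 x hx,
    fun _ hx _ hy _ _ ha hb hab =>
      (sum_le_sum fun i hi => (hf i hi).2 hx hy ha hb hab).trans
        (t.sum_rpow_mul_rpow_le (fun i hi => (hf i hi).1 _ hx) (fun i hi => (hf i hi).1 _ hy)
          ha hb hab)⟩

theorem convexOn_log {f : E → ℝ} (hf : LogConvexOn s f) (hs : Convex ℝ s)
    (hpos : ∀ x ∈ s, 0 < f x) : ConvexOn ℝ s (fun x => log (f x)) := by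
  refine ⟨hs, fun x hx y hy a b ha hb hab => ?_⟩
  calc log (f (a • x + b • y))
      ≤ log (f x ^ a * f y ^ b) :=
        log_le_log (hpos _ (hs hx hy ha hb hab)) (hf.2 hx hy ha hb hab)
    _ = a • log (f x) + b • log (f y) := by
        rw [log_mul (rpow_pos_of_pos (hpos x hx) a).ne' (rpow_pos_of_pos (hpos y hy) b).ne',
          log_rpow (hpos x hx), log_rpow (hpos y hy), smul_eq_mul, smul_eq_mul]

end LogConvexOn

theorem logConvexOn_mul_rpow {q c : ℝ} (hq : 0 ≤ q) (hc : 0 ≤ c) :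
    LogConvexOn (Set.Ioi (0 : ℝ)) (fun t => q * c ^ t) := by
  refine ⟨fun t _ => mul_nonneg hq (rpow_nonneg hc t), fun t₁ ht₁ t₂ ht₂ a b ha hb hab => ?_⟩
  have ht : 0 < a * t₁ + b * t₂ := (convex_Ioi (0 : ℝ)) ht₁ ht₂ ha hb hab
  apply le_of_eq
  calc q * c ^ (a • t₁ + b • t₂)
      = q ^ (a + b) * c ^ (t₁ * a + t₂ * b) := by
        rw [hab, rpow_one, smul_eq_mul, smul_eq_mul]
        ring_nf
    _ = (q * c ^ t₁) ^ a * (q * c ^ t₂) ^ b := by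
        rw [rpow_add' hq (by linarith), rpow_add' hc (by linarith),
          mul_rpow hq (rpow_nonneg hc _), mul_rpow hq (rpow_nonneg hc _), rpow_mul hc, rpow_mul hc]
        ring

theorem LogConvexOn.perspective {g : ℝ → ℝ} (hg : LogConvexOn (Set.Ioi (0 : ℝ)) g) :
    LogConvexOn (Set.Ioi (0 : ℝ)) (fun s => g (1 / s) ^ s) := by
  refine ⟨fun s hs => rpow_nonneg (hg.1 _ (Set.mem_Ioi.2 (one_div_pos.2 hs))) s,
    fun s₁ hs₁ s₂ hs₂ a b ha hb hab => ?_⟩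
  simp only [Set.mem_Ioi, smul_eq_mul] at *
  set s := a * s₁ + b * s₂
  have hs : 0 < s := (convex_Ioi (0 : ℝ)) hs₁ hs₂ ha hb hab
  have huv : a * s₁ / s + b * s₂ / s = 1 := by rw [← add_div]; exact div_self hs.ne'
  have hinv : 1 / s = (a * s₁ / s) • (1 / s₁) + (b * s₂ / s) • (1 / s₂) := by
    simp only [smul_eq_mul]
    field_simp
    exact hab.symm
  have hg₁ := hg.1 _ (one_div_pos.2 hs₁)
  have hg₂ := hg.1 _ (one_div_pos.2 hs₂)
  calc g (1 / s) ^ s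
      ≤ (g (1 / s₁) ^ (a * s₁ / s) * g (1 / s₂) ^ (b * s₂ / s)) ^ s := by
        refine rpow_le_rpow (hg.1 _ (one_div_pos.2 hs)) ?_ hs.le
        rw [hinv]
        exact hg.2 (one_div_pos.2 hs₁) (one_div_pos.2 hs₂) (by positivity) (by positivity) huv
    _ = (g (1 / s₁) ^ s₁) ^ a * (g (1 / s₂) ^ s₂) ^ b := by
        rw [mul_rpow (rpow_nonneg hg₁ _) (rpow_nonneg hg₂ _), ← rpow_mul hg₁, ← rpow_mul hg₂,
          ← rpow_mul hg₁, ← rpow_mul hg₂]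
        congr 2 <;> field_simp

theorem gallager_E0_concave_general
    {X Y : Type*} [Fintype X] [Fintype Y] [Nonempty Y]
    (W : X → Y → ℝ) (hWpos : ∀ x y, 0 < W x y)
    (Q : X → ℝ) (hQ : ∀ x, 0 ≤ Q x) (hQsum : ∑ x, Q x = 1) :
    ConcaveOn ℝ (Set.Ici (0:ℝ))
      (fun ρ => -Real.log (∑ y, (∑ x, Q x * W x y ^ (1 / (1 + ρ))) ^ (1 + ρ))) := by
  obtain ⟨x₀, -, hx₀⟩ := exists_ne_zero_of_sum_ne_zero (by simp [hQsum] : ∑ x, Q x ≠ 0)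
  have hF : LogConvexOn (Set.Ioi (0 : ℝ)) (fun s => ∑ y, (∑ x, Q x * W x y ^ (1 / s)) ^ s) :=
    LogConvexOn.sum fun y _ =>
      (LogConvexOn.sum fun x _ => logConvexOn_mul_rpow (hQ x) (hWpos x y).le).perspective
  have hFpos (s : ℝ) : 0 < ∑ y, (∑ x, Q x * W x y ^ (1 / s)) ^ s := by
    refine sum_pos (fun y _ => rpow_pos_of_pos (sum_pos' (fun x _ => ?_) ⟨x₀, mem_univ _, ?_⟩) s)
      univ_nonempty
    · exact mul_nonneg (hQ x) (rpow_nonneg (hWpos x y).le _)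
    · exact mul_pos ((hQ x₀).lt_of_ne' hx₀) (rpow_pos_of_pos (hWpos x₀ y) _)
  have hlog := ((hF.convexOn_log (convex_Ioi 0) fun s _ => hFpos s).translate_right 1).subset
    (fun ρ (hρ : 0 ≤ ρ) => show (0 : ℝ) < 1 + ρ by linarith) (convex_Ici 0)
  exact hlog.neg

/-- Gallager's channel function `E_0(ρ, W, Q)` is concave in `ρ` on `[0,∞)`. -/
theorem gallager_E0_concave
    {X Y : Type*} [Fintype X] [Fintype Y] [Nonempty X] [Nonempty Y]
    (W : X → Y → ℝ) (hWpos : ∀ x y, 0 < W x y) (hW : ∀ x, ∑ y, W x y = 1)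
    (Q : X → ℝ) (hQ : ∀ x, 0 ≤ Q x) (hQsum : ∑ x, Q x = 1) :
    ConcaveOn ℝ (Set.Ici (0:ℝ))
      (fun ρ => -Real.log (∑ y, (∑ x, Q x * W x y ^ (1 / (1 + ρ))) ^ (1 + ρ))) :=
  gallager_E0_concave_general W hWpos Q hQ hQsum
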